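/- arXiv:2107.02403 — 3 statements merged into one kernel-verified Lean document; each statement's English description precedes it below -/
import Mathlib

section
/- Let G be a locally compact second countable amenable group with Haar measure |·| and compact Fřlner sequence (F_n), let B be a uniformly convex Banach space with modulus of uniform convexity u, and suppose G acts Borel strongly on B via a representation π : G → L_1(B,B). Then for every x ∈ B, the limit of the norms ‖A_n x‖ of the ergodic averages A_n x := (1/|F_n|) ∫_{F_n} π(g⁻¹) x dg exists and equals inf_n ‖A_n x‖. -/
open MeasureTheory Filter Topology
open scoped Pointwise

open scoped ENNReal


theorem pettis_stronglyMeasurable {α : Type*} [MeasurableSpace α] {B : Type*}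
    [NormedAddCommGroup B] [NormedSpace ℝ B] {f : α → B}
    (hsep : TopologicalSpace.IsSeparable (Set.range f))
    (hw : ∀ φ : B →L[ℝ] ℝ, Measurable fun a => φ (f a)) :
    StronglyMeasurable f := by
  classical
  letI : MeasurableSpace B := borel B
  haveI : BorelSpace B := ⟨rfl⟩
  rw [stronglyMeasurable_iff_measurable_separable]
  refine ⟨?_, hsep⟩
  obtain ⟨c, hc_count, hc_sub⟩ := hsep
  -- dual functionals norming each vector
  choose φ hφ1 hφ2 using fun z : B => exists_dual_vector'' ℝ z
  set c' : Set B := Set.image2 (fun d e => d - e) c c with hc'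
  have hc'_count : c'.Countable := hc_count.image2 hc_count _
  -- key: preimages of closed balls centered at points of `c` are measurable
  have key : ∀ y ∈ c, ∀ r : ℝ, MeasurableSet {a | ‖f a - y‖ ≤ r} := by
    intro y hy r
    have hset : {a | ‖f a - y‖ ≤ r} = ⋂ d ∈ c', {a | φ d (f a) ≤ r + φ d y} := by
      ext a
      simp only [Set.mem_setOf_eq, Set.mem_iInter]
      constructor
      · intro h d _
        have h1 : φ d (f a) - φ d y = φ d (f a - y) := by rw [map_sub]
        have h2 : φ d (f a - y) ≤ ‖f a - y‖ := by
          calc φ d (f a - y) ≤ ‖φ d (f a - y)‖ := le_abs_self _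
            _ ≤ ‖φ d‖ * ‖f a - y‖ := (φ d).le_opNorm _
            _ ≤ 1 * ‖f a - y‖ := by
                exact mul_le_mul_of_nonneg_right (hφ1 d) (norm_nonneg _)
            _ = ‖f a - y‖ := one_mul _
        linarith
      · intro h
        refine le_of_forall_pos_le_add ?_
        intro ε hε
        have hfa : f a ∈ closure c := hc_sub ⟨a, rfl⟩
        obtain ⟨d₀, hd₀c, hd₀⟩ := Metric.mem_closure_iff.1 hfa (ε/2) (by linarith)
        have hdc' : d₀ - y ∈ c' := Set.mem_image2_of_mem hd₀c hy
        have hb1 : φ (d₀ - y) (f a) ≤ r + φ (d₀ - y) y := h _ hdc'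
        have hnorm : ∀ z : B, φ (d₀ - y) z ≤ ‖z‖ := by
          intro z
          calc φ (d₀ - y) z ≤ ‖φ (d₀ - y) z‖ := le_abs_self _
            _ ≤ ‖φ (d₀ - y)‖ * ‖z‖ := (φ (d₀ - y)).le_opNorm _
            _ ≤ 1 * ‖z‖ := mul_le_mul_of_nonneg_right (hφ1 _) (norm_nonneg _)
            _ = ‖z‖ := one_mul _
        have e1 : ‖f a - y‖ ≤ ‖d₀ - y‖ + ‖f a - d₀‖ := by
          have h0 : f a - y = (d₀ - y) + (f a - d₀) := by abel
          rw [h0]; exact norm_add_le _ _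
        have e2 : ‖d₀ - y‖ = φ (d₀ - y) (d₀ - y) := by
          have := hφ2 (d₀ - y); simpa using this.symm
        have e3 : φ (d₀ - y) (d₀ - y) = φ (d₀ - y) d₀ - φ (d₀ - y) y := map_sub _ _ _
        have e4 : φ (d₀ - y) d₀ - φ (d₀ - y) (f a) = φ (d₀ - y) (d₀ - f a) := by
          rw [map_sub]
        have e5 : φ (d₀ - y) (d₀ - f a) ≤ ‖d₀ - f a‖ := hnorm _
        have e6 : ‖d₀ - f a‖ < ε/2 := by rw [← dist_eq_norm, dist_comm]; exact hd₀
        have e7 : ‖f a - d₀‖ < ε/2 := by rw [← dist_eq_norm]; exact hd₀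
        linarith
    rw [hset]
    refine MeasurableSet.biInter hc'_count fun d _ => ?_
    exact measurableSet_le (hw (φ d)) measurable_const
  -- measurability of f
  apply measurable_of_isOpen
  intro U hU
  have hUnion : f ⁻¹' U = ⋃ y ∈ c, ⋃ q : ℚ,
      if (0 < (q:ℝ) ∧ Metric.closedBall y (q:ℝ) ⊆ U) then {a | ‖f a - y‖ ≤ (q:ℝ)} else ∅ := by
    ext a
    simp only [Set.mem_preimage, Set.mem_iUnion]
    constructor
    · intro ha
      obtain ⟨ε, hε, hball⟩ := Metric.isOpen_iff.1 hU (f a) ha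
      obtain ⟨q, hq1, hq2⟩ := exists_rat_btwn (half_pos hε)
      have hq0 : 0 < (q:ℝ) := hq1
      have hfa : f a ∈ closure c := hc_sub ⟨a, rfl⟩
      obtain ⟨y, hyc, hy⟩ := Metric.mem_closure_iff.1 hfa (q:ℝ) hq0
      refine ⟨y, hyc, q, ?_⟩
      have hsub : Metric.closedBall y (q:ℝ) ⊆ U := by
        intro z hz
        apply hball
        rw [Metric.mem_ball]
        calc dist z (f a) ≤ dist z y + dist y (f a) := dist_triangle _ _ _
          _ ≤ (q:ℝ) + (q:ℝ) := by
              have := Metric.mem_closedBall.1 hz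
              rw [dist_comm y (f a)]; exact add_le_add this hy.le
          _ < ε := by linarith
      rw [if_pos ⟨hq0, hsub⟩]
      simp only [Set.mem_setOf_eq]
      rw [← dist_eq_norm]; exact hy.le
    · rintro ⟨y, hyc, q, ha⟩
      split_ifs at ha with h
      · have : f a ∈ Metric.closedBall y (q:ℝ) := by
          rw [Metric.mem_closedBall, dist_eq_norm]; exact ha
        exact h.2 this
      · exact absurd ha (Set.notMem_empty a)
  rw [hUnion]
  refine MeasurableSet.biUnion hc_count fun y hy => MeasurableSet.iUnion fun q => ?_
  split_ifs with h
  · exact key y hy q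
  · exact MeasurableSet.empty

/-- the limit of the norms of the ergodic averages exists and equals the
infimum of the norms. -/
theorem folner_ergodic_average_norms_tendsto_iInf
{G : Type*} [Group G] [TopologicalSpace G] [IsTopologicalGroup G]
    [LocallyCompactSpace G] [SecondCountableTopology G]
    [MeasurableSpace G] [BorelSpace G]
    (ν : Measure G) [ν.IsHaarMeasure]
    {B : Type*} [NormedAddCommGroup B] [NormedSpace ℝ B] [CompleteSpace B]
(u : ℝ → ℝ)
    (hu_pos : ∀ ε : ℝ, 0 < ε → 0 < u ε)
    (hu_mono : ∀ ε₁ ε₂ : ℝ, 0 < ε₁ → ε₁ ≤ ε₂ → u ε₁ ≤ u ε₂)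
    (hu : ∀ ε : ℝ, 0 < ε → ∀ y z : B, ‖y‖ ≤ ‖z‖ → ‖z‖ ≤ 1 → ε ≤ ‖y - z‖ →
      ‖(2 : ℝ)⁻¹ • (y + z)‖ ≤ ‖z‖ - u ε)
(π : G →* (B →L[ℝ] B))
    (hπ_norm : ∀ g : G, ‖π g‖ ≤ 1)
    (hπ_sep : ∀ x : B, TopologicalSpace.IsSeparable (Set.range fun g : G => π g x))
    (hπ_weakBorel : ∀ x : B, ∀ φ : B →L[ℝ] ℝ, Measurable fun g : G => φ (π g x))
(F : ℕ → Set G)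
    (hF_compact : ∀ n, IsCompact (F n))
    (hF_pos : ∀ n, 0 < ν (F n))
    (hF_fin : ∀ n, ν (F n) < ⊤)
    (hF_folner : ∀ ε : ℝ, 0 < ε → ∀ K : Set G, IsCompact K →
      ∃ N : ℕ, ∀ n ≥ N, ∃ K' ⊆ K,
        ν (K \ K') < ENNReal.ofReal ε * ν K ∧
        ∀ k ∈ K', ν (symmDiff (F n) (k • F n)) < ENNReal.ofReal ε * ν (F n))
    (x : B)
    (A : ℕ → B)
    (hA : ∀ n : ℕ, A n = (ν (F n)).toReal⁻¹ • ∫ g in F n, π (g⁻¹) x ∂ν) :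
    Tendsto (fun n : ℕ => ‖A n‖) atTop (𝓝 (⨅ n : ℕ, ‖A n‖)) := by
  classical
  -- strong measurability of orbit maps
  have hsmY : ∀ y : B, StronglyMeasurable (fun g : G => π g⁻¹ y) := by
    intro y
    apply pettis_stronglyMeasurable
    · refine (hπ_sep y).mono ?_
      rintro _ ⟨g, rfl⟩; exact ⟨g⁻¹, rfl⟩
    · intro φ
      exact (hπ_weakBorel y φ).comp measurable_inv
  have hbY : ∀ (y : B) (g : G), ‖π g⁻¹ y‖ ≤ ‖y‖ := by
    intro y g
    calc ‖π g⁻¹ y‖ ≤ ‖π g⁻¹‖ * ‖y‖ := (π g⁻¹).le_opNorm y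
      _ ≤ 1 * ‖y‖ := mul_le_mul_of_nonneg_right (hπ_norm _) (norm_nonneg _)
      _ = ‖y‖ := one_mul _
  have hfinres : ∀ s : Set G, ν s < ⊤ → IsFiniteMeasure (ν.restrict s) := by
    intro s hs
    exact ⟨by rwa [Measure.restrict_apply_univ]⟩
  have hintY : ∀ (y : B) (s : Set G), ν s < ⊤ → IntegrableOn (fun g => π g⁻¹ y) s ν := by
    intro y s hs
    haveI := hfinres s hs
    exact Integrable.mono' (integrable_const ‖y‖) ((hsmY y).aestronglyMeasurable)
      (Filter.Eventually.of_forall (hbY y))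
  have hnormY : ∀ (y : B) (s : Set G), ν s < ⊤ →
      ‖∫ g in s, π g⁻¹ y ∂ν‖ ≤ ‖y‖ * (ν s).toReal :=
    fun y s hs => norm_setIntegral_le_of_norm_le_const hs (fun g _ => hbY y g)
  set f : G → B := fun g => π g⁻¹ x with hf_def
  -- measurable hulls of the Folner sets
  set E : ℕ → Set G := fun n => toMeasurable ν (F n) with hE_def
  have hE_meas : ∀ n, MeasurableSet (E n) := fun n => measurableSet_toMeasurable ν (F n)
  have hE_sub : ∀ n, F n ⊆ E n := fun n => subset_toMeasurable ν (F n)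
  have hE_eq : ∀ n, ν (E n) = ν (F n) := fun n => measure_toMeasurable (F n)
  have hE_res : ∀ n, ν.restrict (E n) = ν.restrict (F n) :=
    fun n => Measure.restrict_toMeasurable (hF_fin n).ne
  have hE_fin : ∀ n, ν (E n) < ⊤ := fun n => by rw [hE_eq]; exact hF_fin n
  set c : ℕ → ℝ := fun n => (ν (F n)).toReal with hc_def
  have hc_pos : ∀ n, 0 < c n := fun n => ENNReal.toReal_pos (hF_pos n).ne' (hF_fin n).ne
  have hA' : ∀ n, A n = (c n)⁻¹ • ∫ g in E n, f g ∂ν := by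
    intro n
    rw [hA n, ← hE_res n]
  -- translation machinery
  have hMP : ∀ k : G, MeasurePreserving (fun g => k * g) ν ν :=
    fun k => measurePreserving_mul_left ν k
  have hemb : ∀ k : G, MeasurableEmbedding (fun g : G => k * g) :=
    fun k => (MeasurableEquiv.mulLeft k).measurableEmbedding
  have hsmul_image : ∀ (k : G) (s : Set G), k • s = (fun g => k * g) '' s := by
    intro k s; rfl
  have hsmul_meas : ∀ (k : G) (s : Set G), MeasurableSet s → MeasurableSet (k • s) := by
    intro k s hs
    rw [hsmul_image]
    exact (hemb k).measurableSet_image.2 hs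
  have hmeasure_smul : ∀ (k : G) (s : Set G), ν (k • s) = ν s :=
    fun k s => measure_smul ν k s
  have htrans : ∀ (k : G) n, ∫ g in E n, f (k * g) ∂ν = ∫ g in k • E n, f g ∂ν := by
    intro k n
    rw [hsmul_image]
    exact ((hMP k).setIntegral_image_emb (hemb k) f (E n)).symm
  -- hull property for translated sets
  have hull1 : ∀ n (t : Set G), MeasurableSet t → ν (t ∩ E n) = ν (t ∩ F n) :=
    fun n t ht => by
      rw [Set.inter_comm t (E n), Set.inter_comm t (F n)]
      exact Measure.measure_toMeasurable_inter ht (hF_fin n).ne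
  have hull2 : ∀ (k : G) n (t : Set G), MeasurableSet t →
      ν (t ∩ k • E n) = ν (t ∩ k • F n) := by
    intro k n t ht
    have h1 : t ∩ k • E n = k • (k⁻¹ • t ∩ E n) := by
      rw [Set.smul_set_inter, smul_inv_smul]
    have h2 : t ∩ k • F n = k • (k⁻¹ • t ∩ F n) := by
      rw [Set.smul_set_inter, smul_inv_smul]
    have ht' : MeasurableSet (k⁻¹ • t) := hsmul_meas k⁻¹ t ht
    rw [h1, h2, hmeasure_smul, hmeasure_smul, hull1 n _ ht']
  -- symmetric difference of hulls controlled by symmetric difference of Folner sets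
  have hsymm : ∀ (k : G) n,
      ν (symmDiff (E n) (k • E n)) ≤ 2 * ν (symmDiff (F n) (k • F n)) := by
    intro k n
    have hEn := hE_meas n
    have hkEn := hsmul_meas k (E n) hEn
    have h1 : ν (E n \ k • E n) ≤ ν (symmDiff (F n) (k • F n)) := by
      have e1 : E n \ k • E n = (E n \ k • E n) ∩ E n :=
        (Set.inter_eq_left.2 Set.diff_subset).symm
      rw [e1, hull1 n _ (hEn.diff hkEn)]
      refine measure_mono ?_
      intro g hg
      rw [Set.symmDiff_def]
      refine Set.mem_union_left _ ?_
      exact ⟨hg.2, fun hgk => hg.1.2 (Set.smul_set_mono (hE_sub n) hgk)⟩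
    have h2 : ν (k • E n \ E n) ≤ ν (symmDiff (F n) (k • F n)) := by
      have e1 : k • E n \ E n = (k • E n \ E n) ∩ k • E n :=
        (Set.inter_eq_left.2 Set.diff_subset).symm
      rw [e1, hull2 k n _ (hkEn.diff hEn)]
      refine measure_mono ?_
      intro g hg
      rw [Set.symmDiff_def]
      refine Set.mem_union_right _ ?_
      exact ⟨hg.2, fun hgF => hg.1.2 (hE_sub n hgF)⟩
    calc ν (symmDiff (E n) (k • E n)) ≤ ν (E n \ k • E n) + ν (k • E n \ E n) := by
          rw [Set.symmDiff_def]; exact measure_union_le _ _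
      _ ≤ 2 * ν (symmDiff (F n) (k • F n)) := by
          rw [two_mul]; exact add_le_add h1 h2
  -- difference of integrals over a set and its translate
  have hdiff : ∀ (k : G) n,
      ‖(∫ g in E n, f g ∂ν) - ∫ g in k • E n, f g ∂ν‖ ≤
        ‖x‖ * (ν (symmDiff (E n) (k • E n))).toReal := by
    intro k n
    have hEn := hE_meas n
    have hkEn := hsmul_meas k (E n) hEn
    have hkfin : ν (k • E n) < ⊤ := by rw [hmeasure_smul]; exact hE_fin n
    have hint_s : IntegrableOn f (E n) ν := hintY x (E n) (hE_fin n)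
    have hint_t : IntegrableOn f (k • E n) ν := hintY x _ hkfin
    have h1 : ∫ g in E n, f g ∂ν =
        (∫ g in E n ∩ k • E n, f g ∂ν) + ∫ g in E n \ k • E n, f g ∂ν :=
      (integral_inter_add_diff hkEn hint_s).symm
    have h2 : ∫ g in k • E n, f g ∂ν =
        (∫ g in k • E n ∩ E n, f g ∂ν) + ∫ g in k • E n \ E n, f g ∂ν :=
      (integral_inter_add_diff hEn hint_t).symm
    rw [Set.inter_comm] at h2
    have h3 : (∫ g in E n, f g ∂ν) - ∫ g in k • E n, f g ∂ν =
        (∫ g in E n \ k • E n, f g ∂ν) - ∫ g in k • E n \ E n, f g ∂ν := by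
      rw [h1, h2]; abel
    have hfin1 : ν (E n \ k • E n) < ⊤ := lt_of_le_of_lt (measure_mono Set.diff_subset) (hE_fin n)
    have hfin2 : ν (k • E n \ E n) < ⊤ := lt_of_le_of_lt (measure_mono Set.diff_subset) hkfin
    have h4 : ν (symmDiff (E n) (k • E n)) = ν (E n \ k • E n) + ν (k • E n \ E n) := by
      rw [Set.symmDiff_def]
      exact measure_union (disjoint_sdiff_sdiff) (hkEn.diff hEn)
    rw [h3, h4, ENNReal.toReal_add hfin1.ne hfin2.ne, mul_add]
    calc ‖(∫ g in E n \ k • E n, f g ∂ν) - ∫ g in k • E n \ E n, f g ∂ν‖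
        ≤ ‖∫ g in E n \ k • E n, f g ∂ν‖ + ‖∫ g in k • E n \ E n, f g ∂ν‖ :=
          norm_sub_le _ _
      _ ≤ ‖x‖ * (ν (E n \ k • E n)).toReal + ‖x‖ * (ν (k • E n \ E n)).toReal :=
          add_le_add (hnormY x _ hfin1) (hnormY x _ hfin2)
  -- the key approximate monotonicity estimate
  have key : ∀ m : ℕ, ∀ ε : ℝ, 0 < ε → ∃ N, ∀ n ≥ N, ‖A n‖ ≤ ‖A m‖ + 4 * ε * ‖x‖ := by
    intro m ε hε
    obtain ⟨N, hN⟩ := hF_folner ε hε (F m) (hF_compact m)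
    refine ⟨N, fun n hn => ?_⟩
    obtain ⟨K', hK'sub, hK'small, hK'good⟩ := hN n hn
    set S : Set G := toMeasurable ν (F m \ K') with hS_def
    have hS_meas : MeasurableSet S := measurableSet_toMeasurable _ _
    have hS_small : ν S < ENNReal.ofReal ε * ν (F m) := by
      rw [hS_def, measure_toMeasurable]; exact hK'small
    have hgood : ∀ k ∈ F m \ S,
        ν (symmDiff (F n) (k • F n)) < ENNReal.ofReal ε * ν (F n) := by
      intro k hk
      refine hK'good k ?_
      by_contra hk'
      exact hk.2 (subset_toMeasurable ν (F m \ K') ⟨hk.1, hk'⟩)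
    haveI hfinEm := hfinres (E m) (hE_fin m)
    haveI hfinEn := hfinres (E n) (hE_fin n)
    -- main objects
    set I : B := ∫ g in E n, f g ∂ν with hI_def
    set J : G → B := fun k => ∫ g in E n, f (k * g) ∂ν with hJ_def
    have hJ_trans : ∀ k, J k = ∫ g in k • E n, f g ∂ν := fun k => htrans k n
    have hJ_bound : ∀ k, ‖J k‖ ≤ ‖x‖ * c n := by
      intro k
      rw [hJ_trans k]
      have : ν (k • E n) < ⊤ := by rw [hmeasure_smul]; exact hE_fin n
      calc ‖∫ g in k • E n, f g ∂ν‖ ≤ ‖x‖ * (ν (k • E n)).toReal := hnormY x _ this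
        _ = ‖x‖ * c n := by rw [hmeasure_smul, hE_eq]
    have hI_bound : ‖I‖ ≤ ‖x‖ * c n := by
      calc ‖I‖ ≤ ‖x‖ * (ν (E n)).toReal := hnormY x _ (hE_fin n)
        _ = ‖x‖ * c n := by rw [hE_eq]
    -- strong measurability of J
    have hJsm : StronglyMeasurable J := by
      have h1 : StronglyMeasurable (fun p : G × G => f (p.1 * p.2)) :=
        (hsmY x).comp_measurable (measurable_fst.mul measurable_snd)
      exact h1.integral_prod_right'
    have hJint : IntegrableOn J (E m) ν :=
      Integrable.mono' (integrable_const (‖x‖ * c n)) hJsm.aestronglyMeasurable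
        (Filter.Eventually.of_forall hJ_bound)
    -- Fubini: the average of A m under the averaging operator of F n
    have hFub : ∫ g in E n, π g⁻¹ (A m) ∂ν = (c m)⁻¹ • ∫ k in E m, J k ∂ν := by
      have hptwise : ∀ g : G, π g⁻¹ (A m) =
          (c m)⁻¹ • ∫ k in E m, π g⁻¹ (π k⁻¹ x) ∂ν := by
        intro g
        rw [hA' m, ContinuousLinearMap.map_smul]
        congr 1
        exact (ContinuousLinearMap.integral_comp_comm (π g⁻¹)
          (hintY x (E m) (hE_fin m))).symm
      have hc1 : ∀ (g k : G), π g⁻¹ (π k⁻¹ x) = f (k * g) := by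
        intro g k
        show π g⁻¹ (π k⁻¹ x) = π (k * g)⁻¹ x
        rw [mul_inv_rev, map_mul]
        rfl
      have hswap : ∫ g in E n, ∫ k in E m, f (k * g) ∂ν ∂ν
          = ∫ k in E m, ∫ g in E n, f (k * g) ∂ν ∂ν := by
        apply integral_integral_swap
        have hm : StronglyMeasurable (Function.uncurry fun (g k : G) => f (k * g)) :=
          (hsmY x).comp_measurable (measurable_snd.mul measurable_fst)
        refine Integrable.mono' (integrable_const ‖x‖) hm.aestronglyMeasurable ?_
        exact Filter.Eventually.of_forall fun p => hbY x _
      calc ∫ g in E n, π g⁻¹ (A m) ∂ν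
          = ∫ g in E n, (c m)⁻¹ • (∫ k in E m, π g⁻¹ (π k⁻¹ x) ∂ν) ∂ν := by
            exact setIntegral_congr_fun (hE_meas n) fun g _ => hptwise g
        _ = (c m)⁻¹ • ∫ g in E n, (∫ k in E m, π g⁻¹ (π k⁻¹ x) ∂ν) ∂ν := by
            rw [integral_smul]
        _ = (c m)⁻¹ • ∫ g in E n, (∫ k in E m, f (k * g) ∂ν) ∂ν := by
            congr 1
            refine setIntegral_congr_fun (hE_meas n) fun g _ => ?_
            exact integral_congr_ae (Filter.Eventually.of_forall fun k => hc1 g k)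
        _ = (c m)⁻¹ • ∫ k in E m, J k ∂ν := by rw [hswap]
    -- the averaged difference
    have hIrep : I = (c m)⁻¹ • ∫ _k in E m, I ∂ν := by
      rw [setIntegral_const, measureReal_def, hE_eq m]
      rw [smul_smul, inv_mul_cancel₀ (hc_pos m).ne', one_smul]
    have hIint : IntegrableOn (fun _ : G => I) (E m) ν := integrable_const I
    have hdiff_rep : I - (∫ g in E n, π g⁻¹ (A m) ∂ν) =
        (c m)⁻¹ • ∫ k in E m, (I - J k) ∂ν := by
      rw [hFub, integral_sub hIint hJint, smul_sub]
      nth_rewrite 1 [hIrep]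
      rfl
    -- estimate the averaged difference over the good and bad parts
    set D : G → B := fun k => I - J k with hD_def
    have hDsm : StronglyMeasurable D := stronglyMeasurable_const.sub hJsm
    have hDint : IntegrableOn D (E m) ν :=
      (integrable_const I).sub hJint
    have hD_bound : ∀ k, ‖D k‖ ≤ 2 * (‖x‖ * c n) := by
      intro k
      calc ‖D k‖ ≤ ‖I‖ + ‖J k‖ := norm_sub_le _ _
        _ ≤ (‖x‖ * c n) + (‖x‖ * c n) := add_le_add hI_bound (hJ_bound k)
        _ = 2 * (‖x‖ * c n) := by ring
    have hD_good : ∀ k ∈ F m \ S, ‖D k‖ ≤ 2 * ε * (‖x‖ * c n) := by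
      intro k hk
      have hg := hgood k hk
      have h1 : ν (symmDiff (E n) (k • E n)) ≤ 2 * (ENNReal.ofReal ε * ν (F n)) :=
        le_trans (hsymm k n) (mul_le_mul_right hg.le 2)
      have h2 : (ν (symmDiff (E n) (k • E n))).toReal ≤ 2 * (ε * c n) := by
        have hne : (2 : ℝ≥0∞) * (ENNReal.ofReal ε * ν (F n)) ≠ ⊤ :=
          ENNReal.mul_ne_top (by norm_num)
            (ENNReal.mul_ne_top ENNReal.ofReal_ne_top (hF_fin n).ne)
        calc (ν (symmDiff (E n) (k • E n))).toReal
            ≤ ((2 : ℝ≥0∞) * (ENNReal.ofReal ε * ν (F n))).toReal :=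
              ENNReal.toReal_mono hne h1
          _ = 2 * (ε * c n) := by
              rw [ENNReal.toReal_mul, ENNReal.toReal_mul, ENNReal.toReal_ofReal hε.le]
              norm_num
              exact Or.inl rfl
      calc ‖D k‖ = ‖I - J k‖ := rfl
        _ ≤ ‖x‖ * (ν (symmDiff (E n) (k • E n))).toReal := by
            rw [hJ_trans k]; exact hdiff k n
        _ ≤ ‖x‖ * (2 * (ε * c n)) :=
            mul_le_mul_of_nonneg_left h2 (norm_nonneg x)
        _ = 2 * ε * (‖x‖ * c n) := by ring
    -- split the integral
    have hsplit : ∫ k in E m, D k ∂ν =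
        (∫ k in E m ∩ S, D k ∂ν) + ∫ k in E m \ S, D k ∂ν :=
      (integral_inter_add_diff hS_meas hDint).symm
    have hbadfin : ν (E m ∩ S) < ⊤ :=
      lt_of_le_of_lt (measure_mono Set.inter_subset_left) (hE_fin m)
    have hbad_meas : (ν (E m ∩ S)).toReal ≤ ε * c m := by
      have h1 : ν (E m ∩ S) ≤ ENNReal.ofReal ε * ν (F m) :=
        le_trans (measure_mono Set.inter_subset_right) hS_small.le
      have hne : ENNReal.ofReal ε * ν (F m) ≠ ⊤ :=
        ENNReal.mul_ne_top ENNReal.ofReal_ne_top (hF_fin m).ne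
      calc (ν (E m ∩ S)).toReal ≤ (ENNReal.ofReal ε * ν (F m)).toReal :=
            ENNReal.toReal_mono hne h1
        _ = ε * c m := by rw [ENNReal.toReal_mul, ENNReal.toReal_ofReal hε.le]
    have hbound1 : ‖∫ k in E m ∩ S, D k ∂ν‖ ≤ 2 * (‖x‖ * c n) * (ε * c m) := by
      calc ‖∫ k in E m ∩ S, D k ∂ν‖ ≤ 2 * (‖x‖ * c n) * (ν (E m ∩ S)).toReal :=
            norm_setIntegral_le_of_norm_le_const hbadfin (fun k _ => hD_bound k)
        _ ≤ 2 * (‖x‖ * c n) * (ε * c m) := by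
            refine mul_le_mul_of_nonneg_left hbad_meas ?_
            positivity
    have hres2 : ν.restrict (E m \ S) = ν.restrict (F m \ S) := by
      rw [Set.diff_eq, Set.inter_comm, ← Measure.restrict_restrict hS_meas.compl,
        hE_res m, Measure.restrict_restrict hS_meas.compl, Set.inter_comm, ← Set.diff_eq]
    have hFmSfin : ν (F m \ S) < ⊤ :=
      lt_of_le_of_lt (measure_mono Set.diff_subset) (hF_fin m)
    have hFmS_meas : (ν (F m \ S)).toReal ≤ c m :=
      ENNReal.toReal_mono (hF_fin m).ne (measure_mono Set.diff_subset)
    have hbound2 : ‖∫ k in E m \ S, D k ∂ν‖ ≤ 2 * ε * (‖x‖ * c n) * c m := by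
      have h0 : ∫ k in E m \ S, D k ∂ν = ∫ k in F m \ S, D k ∂ν := by
        show ∫ k, D k ∂(ν.restrict (E m \ S)) = ∫ k, D k ∂(ν.restrict (F m \ S))
        rw [hres2]
      rw [h0]
      calc ‖∫ k in F m \ S, D k ∂ν‖ ≤ 2 * ε * (‖x‖ * c n) * (ν (F m \ S)).toReal :=
            norm_setIntegral_le_of_norm_le_const hFmSfin hD_good
        _ ≤ 2 * ε * (‖x‖ * c n) * c m := by
            refine mul_le_mul_of_nonneg_left hFmS_meas ?_
            positivity
    have htotal : ‖∫ k in E m, D k ∂ν‖ ≤ 4 * ε * ‖x‖ * c n * c m := by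
      rw [hsplit]
      calc ‖(∫ k in E m ∩ S, D k ∂ν) + ∫ k in E m \ S, D k ∂ν‖
          ≤ ‖∫ k in E m ∩ S, D k ∂ν‖ + ‖∫ k in E m \ S, D k ∂ν‖ := norm_add_le _ _
        _ ≤ 2 * (‖x‖ * c n) * (ε * c m) + 2 * ε * (‖x‖ * c n) * c m :=
            add_le_add hbound1 hbound2
        _ = 4 * ε * ‖x‖ * c n * c m := by ring
    -- assemble
    set T : B := (c n)⁻¹ • ∫ g in E n, π g⁻¹ (A m) ∂ν with hT_def
    have hT_norm : ‖T‖ ≤ ‖A m‖ := by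
      rw [hT_def, norm_smul, Real.norm_eq_abs, abs_of_nonneg (inv_nonneg.2 (hc_pos n).le)]
      calc (c n)⁻¹ * ‖∫ g in E n, π g⁻¹ (A m) ∂ν‖
          ≤ (c n)⁻¹ * (‖A m‖ * (ν (E n)).toReal) := by
            refine mul_le_mul_of_nonneg_left (hnormY (A m) (E n) (hE_fin n)) ?_
            positivity
        _ = ‖A m‖ := by
            rw [hE_eq n]
            have hcn : (ν (F n)).toReal = c n := rfl
            rw [hcn]
            field_simp [(hc_pos n).ne']
    have hAnT : ‖A n - T‖ ≤ 4 * ε * ‖x‖ := by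
      have h1 : A n - T = (c n)⁻¹ • (I - ∫ g in E n, π g⁻¹ (A m) ∂ν) := by
        rw [hA' n, hT_def, ← smul_sub]
      rw [h1, hdiff_rep, norm_smul, norm_smul, Real.norm_eq_abs, Real.norm_eq_abs,
        abs_of_nonneg (inv_nonneg.2 (hc_pos n).le), abs_of_nonneg (inv_nonneg.2 (hc_pos m).le)]
      calc (c n)⁻¹ * ((c m)⁻¹ * ‖∫ k in E m, D k ∂ν‖)
          ≤ (c n)⁻¹ * ((c m)⁻¹ * (4 * ε * ‖x‖ * c n * c m)) := by
            refine mul_le_mul_of_nonneg_left (mul_le_mul_of_nonneg_left htotal ?_) ?_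
            · positivity
            · positivity
        _ = 4 * ε * ‖x‖ := by
            rw [show (4:ℝ) * ε * ‖x‖ * c n * c m = c n * c m * (4 * ε * ‖x‖) by ring,
              show (c n)⁻¹ * ((c m)⁻¹ * (c n * c m * (4 * ε * ‖x‖))) =
                ((c n)⁻¹ * c n) * (((c m)⁻¹ * c m) * (4 * ε * ‖x‖)) by ring,
              inv_mul_cancel₀ (hc_pos n).ne', inv_mul_cancel₀ (hc_pos m).ne']
            ring
    calc ‖A n‖ = ‖T + (A n - T)‖ := by congr 1; abel
      _ ≤ ‖T‖ + ‖A n - T‖ := norm_add_le _ _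
      _ ≤ ‖A m‖ + 4 * ε * ‖x‖ := add_le_add hT_norm hAnT
  -- conclude the convergence
  have hbdd : BddBelow (Set.range fun n => ‖A n‖) :=
    ⟨0, by rintro _ ⟨n, rfl⟩; exact norm_nonneg _⟩
  set L : ℝ := ⨅ n : ℕ, ‖A n‖ with hL_def
  have hL_le : ∀ n, L ≤ ‖A n‖ := fun n => ciInf_le hbdd n
  rw [Metric.tendsto_atTop]
  intro δ hδ
  have hδ2 : 0 < δ / 2 := by linarith
  obtain ⟨m, hm⟩ : ∃ m, ‖A m‖ < L + δ / 2 := by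
    by_contra h
    push_neg at h
    have : L + δ / 2 ≤ L := le_ciInf h
    linarith
  set ε : ℝ := δ / (8 * (‖x‖ + 1)) with hε_def
  have hxpos : (0:ℝ) < ‖x‖ + 1 := by positivity
  have hε_pos : 0 < ε := by positivity
  obtain ⟨N, hN⟩ := key m ε hε_pos
  refine ⟨N, fun n hn => ?_⟩
  have h1 : ‖A n‖ ≤ ‖A m‖ + 4 * ε * ‖x‖ := hN n hn
  have h2 : 4 * ε * ‖x‖ ≤ δ / 2 := by
    have hx0 : (0:ℝ) ≤ ‖x‖ := norm_nonneg x
    have hεδ : ε * (8 * (‖x‖ + 1)) = δ := by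
      rw [hε_def]; field_simp
    have key2 : 4 * ε * ‖x‖ * (2 * (‖x‖ + 1)) ≤ δ / 2 * (2 * (‖x‖ + 1)) := by
      nlinarith [hεδ, hδ, hx0]
    exact le_of_mul_le_mul_right key2 (by positivity)
  have h3 : ‖A n‖ < L + δ := by
    calc ‖A n‖ ≤ ‖A m‖ + 4 * ε * ‖x‖ := h1
      _ < L + δ / 2 + δ / 2 := by linarith
      _ = L + δ := by ring
  rw [Real.dist_eq, abs_of_nonneg (by linarith [hL_le n] : (0:ℝ) ≤ ‖A n‖ - L)]
  linarith [hL_le n]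
end

section
/- (Main theorem, case ‖x‖ ≤ 1.) Let G be a locally compact second countable amenable group with Haar measure |·| and compact Fřlner sequence (F_n) admitting a Fřlner convergence modulus β(n,ε) which is nondecreasing in n, let B be a uniformly convex Banach space with modulus of uniform convexity u, and suppose G acts Borel strongly on B via a representation π : G → L_1(B,B). Fix x ∈ B with 0 < ‖x‖ ≤ 1, ε > 0, and 0 < η < u(ε)/2. Then the sequence (A_n x) of ergodic averages has at most ⌊‖x‖/(u(ε)/2 − η)⌋ ε-fluctuations at distance n ↦ β(n, η/(3‖x‖)); that is, every finite sequence of indices n_1 < n_2 < ⋯ < n_k with n_{i+1} ≥ β(n_i, η/(3‖x‖)) and ‖A_{n_i} x − A_{n_{i+1}} x‖ ≥ ε for all 1 ≤ i < k satisfies k − 1 ≤ ⌊‖x‖/(u(ε)/2 − η)⌋. -/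
open MeasureTheory Filter Topology
open scoped Pointwise

section AuxLemmas

lemma pettis_aux {α B : Type*} [MeasurableSpace α] [NormedAddCommGroup B] [NormedSpace ℝ B]
    (f : α → B) (hsep : TopologicalSpace.IsSeparable (Set.range f))
    (hw : ∀ φ : B →L[ℝ] ℝ, Measurable fun a => φ (f a)) :
    MeasureTheory.StronglyMeasurable f := by
  letI : MeasurableSpace B := borel B
  haveI : BorelSpace B := ⟨rfl⟩
  rw [stronglyMeasurable_iff_measurable_separable]
  refine ⟨?_, hsep⟩
  -- countable dense subset of range f
  obtain ⟨C, hCc, hCd⟩ := hsep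
  -- the set of differences is separable
  have hD2 : TopologicalSpace.IsSeparable ((fun p : B × B => p.1 - p.2) '' (Set.range f ×ˢ C)) :=
    (TopologicalSpace.IsSeparable.image (TopologicalSpace.IsSeparable.prod ⟨C, hCc, hCd⟩ hCc.isSeparable) (f := fun p : B × B => p.1 - p.2) (by fun_prop))
  obtain ⟨W, hWc, hWd⟩ := hD2
  -- norming functionals
  have hΦ : ∀ b : B, ∃ φ : B →L[ℝ] ℝ, ‖φ‖ ≤ 1 ∧ φ b = ‖b‖ := fun b => exists_dual_vector'' ℝ b
  choose Φ hΦ1 hΦ2 using hΦ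
  have key : ∀ c ∈ C, ∀ q : ℝ, MeasurableSet {a | ‖f a - c‖ ≤ q} := by
    intro c hc q
    have heq : {a | ‖f a - c‖ ≤ q} = ⋂ w ∈ W, {a | Φ w (f a) ≤ q + Φ w c} := by
      ext a
      simp only [Set.mem_setOf_eq, Set.mem_iInter]
      constructor
      · intro h w _
        have : Φ w (f a) - Φ w c ≤ ‖f a - c‖ := by
          calc Φ w (f a) - Φ w c = Φ w (f a - c) := by rw [map_sub]
            _ ≤ ‖Φ w (f a - c)‖ := le_abs_self _
            _ ≤ ‖Φ w‖ * ‖f a - c‖ := (Φ w).le_opNorm _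
            _ ≤ 1 * ‖f a - c‖ := by
                exact mul_le_mul_of_nonneg_right (hΦ1 w) (norm_nonneg _)
            _ = ‖f a - c‖ := one_mul _
        linarith
      · intro h
        have hv : f a - c ∈ closure W := by
          apply hWd
          exact ⟨(f a, c), ⟨Set.mem_range_self a, hc⟩, rfl⟩
        refine le_of_forall_pos_le_add fun δ hδ => ?_
        obtain ⟨w, hwW, hwd⟩ := Metric.mem_closure_iff.1 hv (δ/2) (by positivity)
        have h1 : Φ w (f a) ≤ q + Φ w c := h w hwW
        have h2 : ‖f a - c‖ ≤ ‖w‖ + δ/2 := by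
          have := dist_eq_norm (f a - c) w ▸ hwd.le
          calc ‖f a - c‖ ≤ ‖w‖ + ‖(f a - c) - w‖ := norm_le_insert' _ _
            _ ≤ ‖w‖ + δ/2 := by
                have : ‖(f a - c) - w‖ = dist (f a - c) w := (dist_eq_norm _ _).symm
                rw [this]; linarith [hwd.le]
        have h3 : ‖w‖ = Φ w w := (hΦ2 w).symm
        have h4 : Φ w w ≤ Φ w (f a - c) + δ/2 := by
          have hms : Φ w (w - (f a - c)) = Φ w w - Φ w (f a - c) := map_sub _ _ _
          have h5 : Φ w (w - (f a - c)) ≤ ‖w - (f a - c)‖ := by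
            calc Φ w (w - (f a - c)) ≤ ‖Φ w (w - (f a - c))‖ := le_abs_self _
              _ ≤ ‖Φ w‖ * ‖w - (f a - c)‖ := (Φ w).le_opNorm _
              _ ≤ 1 * ‖w - (f a - c)‖ := mul_le_mul_of_nonneg_right (hΦ1 w) (norm_nonneg _)
              _ = _ := one_mul _
          have h6 : ‖w - (f a - c)‖ ≤ δ/2 := by
            rw [norm_sub_rev, ← dist_eq_norm]; linarith [hwd.le]
          linarith
        have h7 : Φ w (f a - c) = Φ w (f a) - Φ w c := map_sub _ _ _
        linarith
    rw [heq]
    exact MeasurableSet.biInter hWc fun w _ =>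
      measurableSet_le (hw (Φ w)) measurable_const
  -- now measurability
  apply measurable_generateFrom
  intro U hU
  have hUo : IsOpen U := hU
  have heq : f ⁻¹' U = ⋃ c ∈ C, ⋃ q : ℚ, ⋃ (_ : 0 < (q:ℝ) ∧ Metric.closedBall c (q:ℝ) ⊆ U),
      {a | ‖f a - c‖ ≤ (q:ℝ)} := by
    ext a
    simp only [Set.mem_preimage, Set.mem_iUnion, Set.mem_setOf_eq]
    constructor
    · intro ha
      obtain ⟨r, hr, hball⟩ := Metric.isOpen_iff.1 hUo (f a) ha
      have : f a ∈ closure C := hCd (Set.mem_range_self a)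
      obtain ⟨c, hcC, hcd⟩ := Metric.mem_closure_iff.1 this (r/4) (by positivity)
      obtain ⟨q, hq1, hq2⟩ := exists_rat_btwn (show r/4 < r/2 by linarith)
      refine ⟨c, hcC, q, ⟨lt_trans (by linarith) hq1, ?_⟩, ?_⟩
      · intro y hy
        apply hball
        have : dist y (f a) ≤ dist y c + dist c (f a) := dist_triangle _ _ _
        have h2 : dist c (f a) = dist (f a) c := dist_comm _ _
        simp only [Metric.mem_closedBall] at hy
        simp only [Metric.mem_ball]
        linarith
      · rw [← dist_eq_norm]; linarith
    · rintro ⟨c, _, q, ⟨_, hsub⟩, hle⟩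
      exact hsub (by simpa [Metric.mem_closedBall, dist_eq_norm] using hle)
  rw [heq]
  exact MeasurableSet.biUnion hCc fun c hc => MeasurableSet.iUnion fun q =>
    MeasurableSet.iUnion fun _ => key c hc q


lemma integral_diff_measure_le {X E : Type*} [MeasurableSpace X] [NormedAddCommGroup E]
    [NormedSpace ℝ E] (μ₁ μ₂ ρ : Measure X) [IsFiniteMeasure μ₁] [IsFiniteMeasure μ₂]
    [IsFiniteMeasure ρ]
    (hle₁ : ∀ s, MeasurableSet s → μ₁ s ≤ μ₂ s + ρ s)
    (hle₂ : ∀ s, MeasurableSet s → μ₂ s ≤ μ₁ s + ρ s)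
    (f : X → E) (hf : StronglyMeasurable f) (C : ℝ) (hC0 : 0 ≤ C) (hC : ∀ a, ‖f a‖ ≤ C) :
    ‖∫ a, f a ∂μ₁ - ∫ a, f a ∂μ₂‖ ≤ C * (ρ Set.univ).toReal := by
  obtain ⟨P, hP, h₂₁, h₁₂⟩ := hahn_decomposition (μ := μ₁) (ν := μ₂)
  have hint : ∀ (μ : Measure X), IsFiniteMeasure μ → Integrable f μ := by
    intro μ hμ
    exact Integrable.mono' (integrable_const C) hf.aestronglyMeasurable
      (Filter.Eventually.of_forall hC)
  have hres1 : μ₂.restrict P ≤ μ₁.restrict P := by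
    refine Measure.le_iff.2 fun s hs => ?_
    rw [Measure.restrict_apply hs, Measure.restrict_apply hs]
    exact h₂₁ _ (hs.inter hP) Set.inter_subset_right
  have hres2 : μ₁.restrict Pᶜ ≤ μ₂.restrict Pᶜ := by
    refine Measure.le_iff.2 fun s hs => ?_
    rw [Measure.restrict_apply hs, Measure.restrict_apply hs]
    exact h₁₂ _ (hs.inter hP.compl) Set.inter_subset_right
  set d₁ : Measure X := μ₁.restrict P - μ₂.restrict P with hd₁
  set d₂ : Measure X := μ₂.restrict Pᶜ - μ₁.restrict Pᶜ with hd₂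
  haveI hfin1 : IsFiniteMeasure d₁ := isFiniteMeasure_of_le (μ₁.restrict P) Measure.sub_le
  haveI hfin2 : IsFiniteMeasure d₂ := isFiniteMeasure_of_le (μ₂.restrict Pᶜ) Measure.sub_le
  have e1 : ∫ a, f a ∂μ₁ = ∫ a, f a ∂d₁ + ∫ a, f a ∂(μ₂.restrict P)
      + ∫ a, f a ∂(μ₁.restrict Pᶜ) := by
    conv_lhs => rw [← Measure.restrict_add_restrict_compl (μ := μ₁) hP]
    rw [integral_add_measure (hint _ inferInstance) (hint _ inferInstance)]
    congr 1
    conv_lhs => rw [← Measure.sub_add_cancel_of_le hres1]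
    rw [integral_add_measure (hint _ inferInstance) (hint _ inferInstance)]
  have e2 : ∫ a, f a ∂μ₂ = ∫ a, f a ∂d₂ + ∫ a, f a ∂(μ₂.restrict P)
      + ∫ a, f a ∂(μ₁.restrict Pᶜ) := by
    conv_lhs => rw [← Measure.restrict_add_restrict_compl (μ := μ₂) hP]
    rw [integral_add_measure (hint _ inferInstance) (hint _ inferInstance)]
    have : ∫ a, f a ∂(μ₂.restrict Pᶜ) = ∫ a, f a ∂d₂ + ∫ a, f a ∂(μ₁.restrict Pᶜ) := by
      conv_lhs => rw [← Measure.sub_add_cancel_of_le hres2]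
      rw [integral_add_measure (hint _ inferInstance) (hint _ inferInstance)]
    rw [this]; abel
  have hdiff : ∫ a, f a ∂μ₁ - ∫ a, f a ∂μ₂ = ∫ a, f a ∂d₁ - ∫ a, f a ∂d₂ := by
    rw [e1, e2]; abel
  rw [hdiff]
  have hb1 : ‖∫ a, f a ∂d₁‖ ≤ C * (d₁ Set.univ).toReal :=
    norm_integral_le_of_norm_le_const (Filter.Eventually.of_forall hC)
  have hb2 : ‖∫ a, f a ∂d₂‖ ≤ C * (d₂ Set.univ).toReal :=
    norm_integral_le_of_norm_le_const (Filter.Eventually.of_forall hC)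
  have hd1u : d₁ Set.univ ≤ ρ P := by
    rw [hd₁, Measure.sub_apply MeasurableSet.univ hres1, Measure.restrict_apply_univ,
      Measure.restrict_apply_univ]
    exact tsub_le_iff_right.2 (by rw [add_comm]; exact hle₁ P hP)
  have hd2u : d₂ Set.univ ≤ ρ Pᶜ := by
    rw [hd₂, Measure.sub_apply MeasurableSet.univ hres2, Measure.restrict_apply_univ,
      Measure.restrict_apply_univ]
    exact tsub_le_iff_right.2 (by rw [add_comm]; exact hle₂ Pᶜ hP.compl)
  have hsum : (d₁ Set.univ).toReal + (d₂ Set.univ).toReal ≤ (ρ Set.univ).toReal := by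
    have h1 : (d₁ Set.univ).toReal ≤ (ρ P).toReal :=
      ENNReal.toReal_mono (measure_ne_top ρ P) hd1u
    have h2 : (d₂ Set.univ).toReal ≤ (ρ Pᶜ).toReal :=
      ENNReal.toReal_mono (measure_ne_top ρ Pᶜ) hd2u
    have h3 : (ρ P).toReal + (ρ Pᶜ).toReal = (ρ Set.univ).toReal := by
      rw [← ENNReal.toReal_add (measure_ne_top ρ P) (measure_ne_top ρ Pᶜ),
        measure_add_measure_compl hP]
    linarith
  calc ‖∫ a, f a ∂d₁ - ∫ a, f a ∂d₂‖ ≤ ‖∫ a, f a ∂d₁‖ + ‖∫ a, f a ∂d₂‖ := norm_sub_le _ _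
    _ ≤ C * (d₁ Set.univ).toReal + C * (d₂ Set.univ).toReal := add_le_add hb1 hb2
    _ = C * ((d₁ Set.univ).toReal + (d₂ Set.univ).toReal) := by ring
    _ ≤ C * (ρ Set.univ).toReal := mul_le_mul_of_nonneg_left hsum hC0

end AuxLemmas

/-- Main theorem, case ‖x‖ ≤ 1: at most ⌊‖x‖/(u(ε)/2 − η)⌋ ε-fluctuations at
distance n ↦ β(n, η/(3‖x‖)). -/
theorem main_theorem_small_norm
{G : Type*} [Group G] [TopologicalSpace G] [IsTopologicalGroup G]
    [LocallyCompactSpace G] [SecondCountableTopology G]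
    [MeasurableSpace G] [BorelSpace G]
    (ν : Measure G) [ν.IsHaarMeasure]
    {B : Type*} [NormedAddCommGroup B] [NormedSpace ℝ B] [CompleteSpace B]
(u : ℝ → ℝ)
    (hu_pos : ∀ ε : ℝ, 0 < ε → 0 < u ε)
    (hu_mono : ∀ ε₁ ε₂ : ℝ, 0 < ε₁ → ε₁ ≤ ε₂ → u ε₁ ≤ u ε₂)
    (hu : ∀ ε : ℝ, 0 < ε → ∀ y z : B, ‖y‖ ≤ ‖z‖ → ‖z‖ ≤ 1 → ε ≤ ‖y - z‖ →
      ‖(2 : ℝ)⁻¹ • (y + z)‖ ≤ ‖z‖ - u ε)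
(π : G →* (B →L[ℝ] B))
    (hπ_norm : ∀ g : G, ‖π g‖ ≤ 1)
    (hπ_sep : ∀ x : B, TopologicalSpace.IsSeparable (Set.range fun g : G => π g x))
    (hπ_weakBorel : ∀ x : B, ∀ φ : B →L[ℝ] ℝ, Measurable fun g : G => φ (π g x))
(F : ℕ → Set G)
    (hF_compact : ∀ n, IsCompact (F n))
    (hF_pos : ∀ n, 0 < ν (F n))
    (hF_fin : ∀ n, ν (F n) < ⊤)
    (hF_folner : ∀ ε : ℝ, 0 < ε → ∀ K : Set G, IsCompact K →
      ∃ N : ℕ, ∀ n ≥ N, ∃ K' ⊆ K,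
        ν (K \ K') < ENNReal.ofReal ε * ν K ∧
        ∀ k ∈ K', ν (symmDiff (F n) (k • F n)) < ENNReal.ofReal ε * ν (F n))
(β : ℕ → ℝ → ℕ)
    (hβ_mono : ∀ ε : ℝ, 0 < ε → Monotone fun n => β n ε)
    (hβ : ∀ n : ℕ, ∀ ε : ℝ, 0 < ε → ∀ m : ℕ, β n ε ≤ m →
      ∃ F' ⊆ F n, ν (F n \ F') < ENNReal.ofReal ε * ν (F n) ∧
        ∀ g ∈ F', ν (symmDiff (F m) (g • F m)) < ENNReal.ofReal ε * ν (F m))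
    (x : B) (hx0 : 0 < ‖x‖) (hx1 : ‖x‖ ≤ 1)
    (ε η : ℝ) (hε : 0 < ε) (hη0 : 0 < η) (hη : η < u ε / 2)
    (A : ℕ → B)
    (hA : ∀ n : ℕ, A n = (ν (F n)).toReal⁻¹ • ∫ g in F n, π (g⁻¹) x ∂ν) :
    ∀ (k : ℕ) (n : ℕ → ℕ),
      (∀ i, i + 1 < k → n i < n (i + 1)) →
      (∀ i, i + 1 < k → β (n i) (η / (3 * ‖x‖)) ≤ n (i + 1)) →
      (∀ i, i + 1 < k → ε ≤ ‖A (n i) - A (n (i + 1))‖) →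
      k - 1 ≤ Nat.floor (‖x‖ / (u ε / 2 - η)) := by
  intro k n hn hβd hfl
  rcases Nat.lt_or_ge k 2 with hk | hk
  · have hk1 : k - 1 = 0 := by omega
    rw [hk1]; exact Nat.zero_le _
  -- basic setup
  set δ : ℝ := η / (3 * ‖x‖) with hδdef
  have hδ : 0 < δ := by positivity
  have hπv : ∀ (g : G) (v : B), ‖π g v‖ ≤ ‖v‖ := by
    intro g v
    calc ‖π g v‖ ≤ ‖π g‖ * ‖v‖ := (π g).le_opNorm v
      _ ≤ 1 * ‖v‖ := mul_le_mul_of_nonneg_right (hπ_norm g) (norm_nonneg v)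
      _ = ‖v‖ := one_mul _
  have smeas0 : ∀ v : B, StronglyMeasurable fun g : G => π g v := fun v =>
    pettis_aux _ (hπ_sep v) (hπ_weakBorel v)
  have smeas : ∀ v : B, StronglyMeasurable fun g : G => π g⁻¹ v := fun v =>
    (smeas0 v).comp_measurable measurable_inv
  have htoR : ∀ m, (0:ℝ) < (ν (F m)).toReal := fun m =>
    ENNReal.toReal_pos (hF_pos m).ne' (hF_fin m).ne
  have finres : ∀ s : Set G, ν s < ⊤ → IsFiniteMeasure (ν.restrict s) := fun s hs =>
    ⟨by rwa [Measure.restrict_apply_univ]⟩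
  have intOn : ∀ (v : B) (s : Set G), ν s < ⊤ →
      IntegrableOn (fun g => π g⁻¹ v) s ν := by
    intro v s hfin
    haveI := finres s hfin
    exact Integrable.mono' (integrable_const ‖v‖)
      (smeas v).aestronglyMeasurable.restrict
      (Filter.Eventually.of_forall fun g => hπv _ _)
  set S : ℕ → B → B := fun m v => (ν (F m)).toReal⁻¹ • ∫ g in F m, π g⁻¹ v ∂ν with hSdef
  have hSx : ∀ m, S m x = A m := by
    intro m; simp only [hSdef]; exact (hA m).symm
  have havg_norm : ∀ (v : B) (s : Set G), ν s < ⊤ →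
      ‖(ν s).toReal⁻¹ • ∫ g in s, π g⁻¹ v ∂ν‖ ≤ ‖v‖ := by
    intro v s hfin
    rw [norm_smul]
    have h1 : ‖∫ g in s, π g⁻¹ v ∂ν‖ ≤ ‖v‖ * (ν s).toReal :=
      norm_setIntegral_le_of_norm_le_const_ae hfin
        (Filter.Eventually.of_forall fun g => hπv _ _)
    have h2 : ‖((ν s).toReal⁻¹ : ℝ)‖ = (ν s).toReal⁻¹ := by
      rw [Real.norm_eq_abs, abs_of_nonneg (by positivity)]
    rw [h2]
    calc (ν s).toReal⁻¹ * ‖∫ g in s, π g⁻¹ v ∂ν‖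
        ≤ (ν s).toReal⁻¹ * (‖v‖ * (ν s).toReal) :=
          mul_le_mul_of_nonneg_left h1 (by positivity)
      _ ≤ ‖v‖ := by
          rcases eq_or_lt_of_le (zero_le : 0 ≤ ν s) with h | h
          · simp [← h]
          · have h3 := ENNReal.toReal_pos h.ne' hfin.ne
            rw [← mul_assoc, mul_comm ((ν s).toReal⁻¹) ‖v‖, mul_assoc,
              inv_mul_cancel₀ h3.ne', mul_one]
  have hS_norm : ∀ m v, ‖S m v‖ ≤ ‖v‖ := by
    intro m v; simp only [hSdef]; exact havg_norm v (F m) (hF_fin m)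
  have hA_norm : ∀ m, ‖A m‖ ≤ ‖x‖ := fun m => by rw [← hSx m]; exact hS_norm m x
  -- midpoint linearity of S
  have hS_mid : ∀ m (p q : B), S m ((2:ℝ)⁻¹ • (p + q)) = (2:ℝ)⁻¹ • (S m p + S m q) := by
    intro m p q
    have h1 : (fun g : G => π g⁻¹ ((2:ℝ)⁻¹ • (p + q)))
        = fun g : G => (2:ℝ)⁻¹ • (π g⁻¹ p + π g⁻¹ q) := by
      funext g; rw [_root_.map_smul, _root_.map_add]
    simp only [hSdef, h1]
    rw [integral_smul, integral_add (intOn p (F m) (hF_fin m)) (intOn q (F m) (hF_fin m)),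
      smul_comm, smul_add]
  -- the key approximation lemma
  have hkey : ∀ p m : ℕ, β p δ ≤ m → ‖S m (A p) - A m‖ ≤ η := by
    intro p m hm
    obtain ⟨F', hF'sub, hF'small, hF'inv⟩ := hβ p δ hδ m hm
    haveI := finres (F m) (hF_fin m)
    haveI := finres (F p) (hF_fin p)
    set f : G → B := fun g => π g⁻¹ x with hfdef
    set cm : ℝ := (ν (F m)).toReal⁻¹ with hcm
    set cp : ℝ := (ν (F p)).toReal⁻¹ with hcp
    have hmulfin : ENNReal.ofReal δ * ν (F m) < ⊤ :=
      ENNReal.mul_lt_top ENNReal.ofReal_lt_top (hF_fin m)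
    -- translation identity
    have htrans : ∀ g : G, ∫ h in F m, π (g*h)⁻¹ x ∂ν = ∫ h in g • F m, f h ∂ν := by
      intro g
      have hmp : MeasurePreserving (fun h : G => g * h) ν ν := measurePreserving_mul_left ν g
      have hemb : MeasurableEmbedding (fun h : G => g * h) :=
        (MeasurableEquiv.mulLeft g).measurableEmbedding
      have himg : (fun h : G => g * h) '' F m = g • F m := by
        ext y
        constructor
        · rintro ⟨h, hh, rfl⟩; exact ⟨h, hh, rfl⟩
        · rintro ⟨h, hh, rfl⟩; exact ⟨h, hh, rfl⟩
      rw [← himg, MeasurePreserving.setIntegral_image_emb hmp hemb f (F m)]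
    set φ : G → B := fun g => cm • ∫ h in F m, π (g*h)⁻¹ x ∂ν with hφdef
    have hφx : ∀ g, ‖φ g‖ ≤ ‖x‖ := by
      intro g
      have hsm : ν (g • F m) = ν (F m) := measure_smul ν g (F m)
      have h2 := havg_norm x (g • F m) (by rw [hsm]; exact hF_fin m)
      rw [hsm] at h2
      simp only [hφdef, htrans g]
      exact h2
    -- per-g estimate on F'
    have hperg : ∀ g ∈ F', ‖φ g - A m‖ ≤ δ * ‖x‖ := by
      intro g hg
      have hsm : ν (g • F m) = ν (F m) := measure_smul ν g (F m)
      haveI i1 : IsFiniteMeasure (ν.restrict (g • F m)) :=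
        finres _ (by rw [hsm]; exact hF_fin m)
      haveI i3 : IsFiniteMeasure (ν.restrict (symmDiff (F m) (g • F m))) :=
        finres _ ((hF'inv g hg).trans hmulfin)
      have hle₁ : ∀ E, MeasurableSet E → ν.restrict (g • F m) E ≤ ν.restrict (F m) E
          + ν.restrict (symmDiff (F m) (g • F m)) E := by
        intro E hE
        rw [Measure.restrict_apply hE, Measure.restrict_apply hE, Measure.restrict_apply hE]
        refine le_trans (measure_mono ?_) (measure_union_le _ _)
        intro y hy
        by_cases hyF : y ∈ F m
        · exact Or.inl ⟨hy.1, hyF⟩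
        · exact Or.inr ⟨hy.1, Set.mem_symmDiff.2 (Or.inr ⟨hy.2, hyF⟩)⟩
      have hle₂ : ∀ E, MeasurableSet E → ν.restrict (F m) E ≤ ν.restrict (g • F m) E
          + ν.restrict (symmDiff (F m) (g • F m)) E := by
        intro E hE
        rw [Measure.restrict_apply hE, Measure.restrict_apply hE, Measure.restrict_apply hE]
        refine le_trans (measure_mono ?_) (measure_union_le _ _)
        intro y hy
        by_cases hyF : y ∈ g • F m
        · exact Or.inl ⟨hy.1, hyF⟩
        · exact Or.inr ⟨hy.1, Set.mem_symmDiff.2 (Or.inl ⟨hy.2, hyF⟩)⟩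
      have hb := integral_diff_measure_le (ν.restrict (g • F m)) (ν.restrict (F m))
        (ν.restrict (symmDiff (F m) (g • F m))) hle₁ hle₂ f (smeas x) ‖x‖ (norm_nonneg x)
        (fun a => hπv _ _)
      rw [Measure.restrict_apply_univ] at hb
      have hΔr : (ν (symmDiff (F m) (g • F m))).toReal ≤ δ * (ν (F m)).toReal := by
        calc (ν (symmDiff (F m) (g • F m))).toReal
            ≤ (ENNReal.ofReal δ * ν (F m)).toReal :=
              ENNReal.toReal_mono hmulfin.ne (hF'inv g hg).le
          _ = δ * (ν (F m)).toReal := by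
              rw [ENNReal.toReal_mul, ENNReal.toReal_ofReal hδ.le]
      have heq : φ g - A m = cm • ((∫ h in g • F m, f h ∂ν) - ∫ h in F m, f h ∂ν) := by
        rw [hA m, smul_sub]
        simp only [hφdef, htrans g]
        rfl
      rw [heq, norm_smul, Real.norm_eq_abs, abs_of_nonneg (by positivity)]
      have hcm1 : cm * (ν (F m)).toReal = 1 := inv_mul_cancel₀ (htoR m).ne'
      calc cm * ‖(∫ h in g • F m, f h ∂ν) - ∫ h in F m, f h ∂ν‖
          ≤ cm * (‖x‖ * (ν (symmDiff (F m) (g • F m))).toReal) := by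
            apply mul_le_mul_of_nonneg_left hb (by positivity)
        _ ≤ cm * (‖x‖ * (δ * (ν (F m)).toReal)) := by
            apply mul_le_mul_of_nonneg_left _ (by positivity)
            exact mul_le_mul_of_nonneg_left hΔr (norm_nonneg x)
        _ = δ * ‖x‖ * (cm * (ν (F m)).toReal) := by ring
        _ = δ * ‖x‖ := by rw [hcm1, mul_one]
    -- strong measurability and integrability of φ
    have hQ : StronglyMeasurable (Function.uncurry fun (g h : G) => π (g*h)⁻¹ x) := by
      have hm2 : Measurable fun q : G × G => (q.1 * q.2)⁻¹ :=
        (measurable_fst.mul measurable_snd).inv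
      exact (smeas0 x).comp_measurable hm2
    have hφsm : StronglyMeasurable φ := by
      have h1 : StronglyMeasurable fun g : G => ∫ h in F m, π (g*h)⁻¹ x ∂ν :=
        hQ.integral_prod_right
      exact h1.const_smul cm
    have hφint : IntegrableOn φ (F p) ν :=
      Integrable.mono' (integrable_const ‖x‖) hφsm.aestronglyMeasurable.restrict
        (Filter.Eventually.of_forall hφx)
    -- Fubini and representation
    have hFub : Integrable (Function.uncurry fun (h g : G) => π (g*h)⁻¹ x)
        ((ν.restrict (F m)).prod (ν.restrict (F p))) := by
      refine Integrable.mono' (integrable_const ‖x‖) ?_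
        (Filter.Eventually.of_forall fun q => hπv _ _)
      have hm2 : Measurable fun q : G × G => (q.2 * q.1)⁻¹ :=
        (measurable_snd.mul measurable_fst).inv
      exact ((smeas0 x).comp_measurable hm2).aestronglyMeasurable
    have hswap : ∫ h in F m, ∫ g in F p, π (g*h)⁻¹ x ∂ν ∂ν
        = ∫ g in F p, ∫ h in F m, π (g*h)⁻¹ x ∂ν ∂ν := integral_integral_swap hFub
    have hrep : S m (A p) = cp • ∫ g in F p, φ g ∂ν := by
      have h1 : (fun h : G => π h⁻¹ (A p)) = fun h : G => cp • ∫ g in F p, π (g*h)⁻¹ x ∂ν := by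
        funext h
        rw [hA p, _root_.map_smul]
        congr 1
        rw [← ContinuousLinearMap.integral_comp_comm (π h⁻¹) (intOn x (F p) (hF_fin p))]
        congr 1; funext g
        show π h⁻¹ (π g⁻¹ x) = π (g*h)⁻¹ x
        rw [mul_inv_rev, _root_.map_mul]; rfl
      simp only [hSdef, h1, hφdef]
      rw [integral_smul, hswap, smul_comm cm cp, ← integral_smul]
    have hconst : cp • ∫ _ in F p, A m ∂ν = A m := by
      rw [setIntegral_const, smul_smul, hcp, measureReal_def, inv_mul_cancel₀ (htoR p).ne', one_smul]
    have hsub : S m (A p) - A m = cp • ∫ g in F p, (φ g - A m) ∂ν := by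
      rw [integral_sub hφint (integrableOn_const (hF_fin p).ne), smul_sub, ← hrep,
        hconst]
    -- split by the good set V
    set V : Set G := {g : G | ‖φ g - A m‖ ≤ δ * ‖x‖} with hVdef
    have hVmeas : MeasurableSet V := by
      have h1 : Measurable fun g => ‖φ g - A m‖ :=
        (hφsm.sub stronglyMeasurable_const).norm.measurable
      exact measurableSet_le h1 measurable_const
    have hF'V : F' ⊆ V := fun g hg => hperg g hg
    have hint2 : IntegrableOn (fun g => φ g - A m) (F p) ν :=
      hφint.sub (integrableOn_const (hF_fin p).ne)
    have hsplit : ∫ g in F p, (φ g - A m) ∂ν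
        = (∫ g in F p ∩ V, (φ g - A m) ∂ν) + ∫ g in F p \ V, (φ g - A m) ∂ν :=
      (integral_inter_add_diff hVmeas hint2).symm
    have hb1 : ‖∫ g in F p ∩ V, (φ g - A m) ∂ν‖ ≤ (δ * ‖x‖) * (ν (F p ∩ V)).toReal := by
      apply norm_setIntegral_le_of_norm_le_const_ae
        (lt_of_le_of_lt (measure_mono Set.inter_subset_left) (hF_fin p))
      have h0 : ν.restrict (F p ∩ V) Vᶜ = 0 := by
        rw [Measure.restrict_apply hVmeas.compl]
        exact measure_mono_null (fun y hy => (hy.1 hy.2.2).elim) measure_empty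
      exact ae_iff.2 (measure_mono_null (fun g hg hgV => hg hgV) h0)
    have hb2 : ‖∫ g in F p \ V, (φ g - A m) ∂ν‖ ≤ (2*‖x‖) * (ν (F p \ V)).toReal :=
      norm_setIntegral_le_of_norm_le_const_ae
        (lt_of_le_of_lt (measure_mono Set.diff_subset) (hF_fin p))
        (Filter.Eventually.of_forall fun g => by
          calc ‖φ g - A m‖ ≤ ‖φ g‖ + ‖A m‖ := norm_sub_le _ _
            _ ≤ ‖x‖ + ‖x‖ := add_le_add (hφx g) (hA_norm m)
            _ = 2*‖x‖ := by ring)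
    have hsmall : (ν (F p \ V)).toReal ≤ δ * (ν (F p)).toReal := by
      have h2 : ν (F p \ V) ≤ ν (F p \ F') := measure_mono (Set.diff_subset_diff_right hF'V)
      have h4 : ν (F p \ V) ≤ ENNReal.ofReal δ * ν (F p) := h2.trans hF'small.le
      calc (ν (F p \ V)).toReal ≤ (ENNReal.ofReal δ * ν (F p)).toReal :=
            ENNReal.toReal_mono (ENNReal.mul_lt_top ENNReal.ofReal_lt_top (hF_fin p)).ne h4
        _ = δ * (ν (F p)).toReal := by rw [ENNReal.toReal_mul, ENNReal.toReal_ofReal hδ.le]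
    have hbig : (ν (F p ∩ V)).toReal ≤ (ν (F p)).toReal :=
      ENNReal.toReal_mono (hF_fin p).ne (measure_mono Set.inter_subset_left)
    have hcp1 : cp * (ν (F p)).toReal = 1 := inv_mul_cancel₀ (htoR p).ne'
    rw [hsub, norm_smul, Real.norm_eq_abs, abs_of_nonneg (by positivity), hsplit]
    calc cp * ‖(∫ g in F p ∩ V, (φ g - A m) ∂ν) + ∫ g in F p \ V, (φ g - A m) ∂ν‖
        ≤ cp * ((δ * ‖x‖) * (ν (F p ∩ V)).toReal + (2*‖x‖) * (ν (F p \ V)).toReal) := by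
          apply mul_le_mul_of_nonneg_left _ (by positivity)
          exact le_trans (norm_add_le _ _) (add_le_add hb1 hb2)
      _ ≤ cp * ((δ * ‖x‖) * (ν (F p)).toReal + (2*‖x‖) * (δ * (ν (F p)).toReal)) := by
          apply mul_le_mul_of_nonneg_left _ (by positivity)
          refine add_le_add ?_ ?_
          · exact mul_le_mul_of_nonneg_left hbig (by positivity)
          · exact mul_le_mul_of_nonneg_left hsmall (by positivity)
      _ = 3 * δ * ‖x‖ * (cp * (ν (F p)).toReal) := by ring
      _ = 3 * δ * ‖x‖ := by rw [hcp1, mul_one]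
      _ = η := by rw [hδdef]; field_simp
  -- combinatorial part
  have hstep1 : ∀ i, i + 1 < k → ‖A (n (i+1))‖ ≤ ‖A (n i)‖ + η := by
    intro i hi
    have h1 := hkey (n i) (n (i+1)) (hβd i hi)
    calc ‖A (n (i+1))‖
        = ‖S (n (i+1)) (A (n i)) - (S (n (i+1)) (A (n i)) - A (n (i+1)))‖ := by
          congr 1; abel
      _ ≤ ‖S (n (i+1)) (A (n i))‖ + ‖S (n (i+1)) (A (n i)) - A (n (i+1))‖ := norm_sub_le _ _
      _ ≤ ‖A (n i)‖ + η := add_le_add (hS_norm _ _) h1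
  have humid : ∀ i, i + 1 < k →
      ‖(2:ℝ)⁻¹ • (A (n i) + A (n (i+1)))‖ ≤ max ‖A (n i)‖ ‖A (n (i+1))‖ - u ε := by
    intro i hi
    rcases le_total ‖A (n i)‖ ‖A (n (i+1))‖ with hle | hle
    · have h1 := hu ε hε (A (n i)) (A (n (i+1))) hle ((hA_norm _).trans hx1) (hfl i hi)
      calc ‖(2:ℝ)⁻¹ • (A (n i) + A (n (i+1)))‖ ≤ ‖A (n (i+1))‖ - u ε := h1
        _ ≤ max ‖A (n i)‖ ‖A (n (i+1))‖ - u ε :=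
            sub_le_sub_right (le_max_right _ _) _
    · have hfl' : ε ≤ ‖A (n (i+1)) - A (n i)‖ := by rw [norm_sub_rev]; exact hfl i hi
      have h1 := hu ε hε (A (n (i+1))) (A (n i)) hle ((hA_norm _).trans hx1) hfl'
      calc ‖(2:ℝ)⁻¹ • (A (n i) + A (n (i+1)))‖
          = ‖(2:ℝ)⁻¹ • (A (n (i+1)) + A (n i))‖ := by rw [add_comm]
        _ ≤ ‖A (n i)‖ - u ε := h1
        _ ≤ max ‖A (n i)‖ ‖A (n (i+1))‖ - u ε := sub_le_sub_right (le_max_left _ _) _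
  have hstep2 : ∀ i, i + 2 < k → ‖A (n (i+2))‖ ≤ max ‖A (n i)‖ ‖A (n (i+1))‖ - u ε + η := by
    intro i hi
    have hi1 : i + 1 < k := by omega
    have h2 : β (n (i+1)) δ ≤ n (i+2) := hβd (i+1) hi
    have h1 : β (n i) δ ≤ n (i+2) := le_trans (hβd i hi1) (le_of_lt (hn (i+1) hi))
    have ha := hkey (n i) (n (i+2)) h1
    have hb := hkey (n (i+1)) (n (i+2)) h2
    have hmid := hS_mid (n (i+2)) (A (n i)) (A (n (i+1)))
    have hdiff : A (n (i+2)) - S (n (i+2)) ((2:ℝ)⁻¹ • (A (n i) + A (n (i+1))))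
        = (2:ℝ)⁻¹ • ((A (n (i+2)) - S (n (i+2)) (A (n i)))
          + (A (n (i+2)) - S (n (i+2)) (A (n (i+1))))) := by
      rw [hmid]; module
    have hclose : ‖A (n (i+2)) - S (n (i+2)) ((2:ℝ)⁻¹ • (A (n i) + A (n (i+1))))‖ ≤ η := by
      rw [hdiff, norm_smul]
      have hn2 : ‖((2:ℝ)⁻¹)‖ = 2⁻¹ := by rw [Real.norm_eq_abs]; norm_num
      rw [hn2]
      have hA2 : ‖(A (n (i+2)) - S (n (i+2)) (A (n i)))
          + (A (n (i+2)) - S (n (i+2)) (A (n (i+1))))‖ ≤ η + η := by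
        refine le_trans (norm_add_le _ _) (add_le_add ?_ ?_)
        · rw [norm_sub_rev]; exact ha
        · rw [norm_sub_rev]; exact hb
      linarith
    calc ‖A (n (i+2))‖
        = ‖S (n (i+2)) ((2:ℝ)⁻¹ • (A (n i) + A (n (i+1))))
          + (A (n (i+2)) - S (n (i+2)) ((2:ℝ)⁻¹ • (A (n i) + A (n (i+1)))))‖ := by
          congr 1; abel
      _ ≤ ‖S (n (i+2)) ((2:ℝ)⁻¹ • (A (n i) + A (n (i+1))))‖
          + ‖A (n (i+2)) - S (n (i+2)) ((2:ℝ)⁻¹ • (A (n i) + A (n (i+1))))‖ := norm_add_le _ _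
      _ ≤ ‖(2:ℝ)⁻¹ • (A (n i) + A (n (i+1)))‖ + η := add_le_add (hS_norm _ _) hclose
      _ ≤ max ‖A (n i)‖ ‖A (n (i+1))‖ - u ε + η := add_le_add_left (humid i hi1) η
  set a : ℕ → ℝ := fun i => ‖A (n i)‖ with hadef
  have hsstep : ∀ i, i + 2 < k → a (i+1) + a (i+2) ≤ (a i + a (i+1)) - (u ε - 2*η) := by
    intro i hi
    have h2 := hstep2 i hi
    have h1 := hstep1 i (by omega)
    have hmax : max (a i) (a (i+1)) ≤ a i + η := by
      apply max_le (by linarith [hη0]) (by simpa [hadef] using h1)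
    simp only [hadef] at h2 ⊢
    have h2' : ‖A (n (i+2))‖ ≤ (a i + η) - u ε + η := by
      refine le_trans h2 ?_
      have : max ‖A (n i)‖ ‖A (n (i+1))‖ = max (a i) (a (i+1)) := rfl
      rw [this]
      linarith [hmax]
    simp only [hadef] at h2'
    linarith
  have htel : ∀ j, j + 1 < k → a j + a (j+1) ≤ a 0 + a 1 - j * (u ε - 2*η) := by
    intro j
    induction j with
    | zero => intro _; simp
    | succ i ih =>
      intro hj
      have hi2 : i + 2 < k := by omega
      have h1 := hsstep i hi2
      have h2 := ih (by omega)
      have hc : ((i+1 : ℕ) : ℝ) * (u ε - 2*η) = (i:ℝ) * (u ε - 2*η) + (u ε - 2*η) := by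
        push_cast; ring
      have heq1 : i + 1 + 1 = i + 2 := rfl
      rw [heq1]
      rw [hc]
      linarith
  -- u ε ≤ ε / 2
  have hεle2 : ε ≤ 2 := by
    have h0 := hfl 0 (by omega)
    have h3 := norm_sub_le (A (n 0)) (A (n 1))
    have h1 := hA_norm (n 0); have h2 := hA_norm (n 1)
    linarith
  have huε : u ε ≤ ε / 2 := by
    set z : B := ‖x‖⁻¹ • x with hz
    have hznorm : ‖z‖ = 1 := by
      rw [hz, norm_smul, Real.norm_eq_abs, abs_of_nonneg (by positivity),
        inv_mul_cancel₀ hx0.ne']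
    set y : B := (1 - ε) • z with hy
    have hynorm : ‖y‖ = |1 - ε| := by
      rw [hy, norm_smul, Real.norm_eq_abs, hznorm, mul_one]
    have h1 : ‖y‖ ≤ ‖z‖ := by
      rw [hynorm, hznorm, abs_le]; constructor <;> linarith
    have h2 : ‖y - z‖ = ε := by
      have hyz : y - z = (-ε) • z := by rw [hy]; module
      rw [hyz, norm_smul, Real.norm_eq_abs, abs_neg, abs_of_nonneg hε.le, hznorm, mul_one]
    have h3 := hu ε hε y z h1 (le_of_eq hznorm) (le_of_eq h2.symm)
    have h4 : (2:ℝ)⁻¹ • (y + z) = (1 - ε/2) • z := by rw [hy]; module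
    rw [h4, norm_smul, Real.norm_eq_abs, hznorm, mul_one] at h3
    have h5 : 1 - ε/2 ≤ |1 - ε/2| := le_abs_self _
    linarith
  -- final arithmetic
  have hck : ε ≤ a (k-2) + a (k-1) := by
    have hkk : k - 2 + 1 < k := by omega
    have h0 := hfl (k-2) hkk
    have heq : k - 2 + 1 = k - 1 := by omega
    rw [heq] at h0
    calc ε ≤ ‖A (n (k-2)) - A (n (k-1))‖ := h0
      _ ≤ a (k-2) + a (k-1) := norm_sub_le _ _
  have htl := htel (k-2) (by omega)
  have heqk : k - 2 + 1 = k - 1 := by omega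
  rw [heqk] at htl
  have ha0 : a 0 ≤ ‖x‖ := hA_norm _
  have ha1 : a 1 ≤ ‖x‖ := hA_norm _
  have hcast : ((k:ℝ) - 2) ≤ ((k-2 : ℕ) : ℝ) := by
    rw [Nat.cast_sub (by omega)]; norm_num
  have hupos : 0 ≤ u ε - 2*η := by linarith
  have hkey2 : ε + ((k:ℝ) - 2) * (u ε - 2*η) ≤ 2 * ‖x‖ := by
    have hmul : ((k:ℝ) - 2) * (u ε - 2*η) ≤ ((k-2:ℕ):ℝ) * (u ε - 2*η) :=
      mul_le_mul_of_nonneg_right hcast hupos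
    linarith
  have hcη : 0 < u ε / 2 - η := by linarith
  have hfin : ((k:ℝ)) * (u ε / 2 - η) ≤ ‖x‖ := by
    have hexp : ((k:ℝ) - 2) * (u ε - 2*η) = 2*((k:ℝ)*(u ε/2 - η)) - 2*(u ε - 2*η) := by ring
    have h4c : 2*(u ε - 2*η) ≤ ε := by linarith
    linarith
  have hgoal : ((k - 1 : ℕ) : ℝ) ≤ ‖x‖ / (u ε / 2 - η) := by
    rw [le_div_iff₀ hcη]
    calc ((k-1:ℕ):ℝ) * (u ε/2 - η) ≤ (k:ℝ) * (u ε/2 - η) := by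
          apply mul_le_mul_of_nonneg_right _ hcη.le
          exact_mod_cast Nat.sub_le k 1
      _ ≤ ‖x‖ := hfin
  exact Nat.le_floor hgoal
end

section
/- Let (X,d) be a metric space, let (x_n) be a sequence in X, and let β : ℕ → ℕ satisfy β(n) > n for all n. Suppose that for every ε > 0 there exists N ∈ ℕ such that (x_n) has at most N ε-fluctuations at distance β, i.e. every finite sequence of indices n_1 < n_2 < ⋯ < n_k with n_{i+1} ≥ β(n_i) and d(x_{n_i}, x_{n_{i+1}}) ≥ ε for all 1 ≤ i < k satisfies k < N. Then (x_n) is a Cauchy sequence. -/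
/-- if for every ε > 0 there is a uniform bound on the number of
ε-fluctuations at distance β (where β(n) > n), then the sequence is Cauchy. -/
theorem cauchy_of_fluctuation_bounds
    {X : Type*} [MetricSpace X] (x : ℕ → X)
    (β : ℕ → ℕ) (hβ : ∀ n, n < β n)
    (h : ∀ ε : ℝ, 0 < ε → ∃ N : ℕ, ∀ (k : ℕ) (n : ℕ → ℕ),
      (∀ i, i + 1 < k → n i < n (i + 1)) →
      (∀ i, i + 1 < k → β (n i) ≤ n (i + 1)) →
      (∀ i, i + 1 < k → ε ≤ dist (x (n i)) (x (n (i + 1)))) →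
      k < N) :
    CauchySeq x := by
  by_contra hc
  rw [Metric.cauchySeq_iff] at hc
  push_neg at hc
  obtain ⟨ε, hε, hnc⟩ := hc
  have hε2 : (0:ℝ) < ε / 2 := by linarith
  obtain ⟨N, hN⟩ := h (ε/2) hε2
  have key : ∀ a : ℕ, ∃ b, β a ≤ b ∧ ε/2 ≤ dist (x a) (x b) := by
    intro a
    obtain ⟨p, hp, q, hq, hd⟩ := hnc (β a)
    by_cases hcase : ε/2 ≤ dist (x a) (x p)
    · exact ⟨p, hp, hcase⟩
    · refine ⟨q, hq, ?_⟩
      have htri : dist (x p) (x q) ≤ dist (x p) (x a) + dist (x a) (x q) :=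
        dist_triangle _ _ _
      have : dist (x p) (x a) = dist (x a) (x p) := dist_comm _ _
      linarith
  let f : ℕ → ℕ := fun k => Nat.rec 0 (fun _ prev => Classical.choose (key prev)) k
  have hf : ∀ k, β (f k) ≤ f (k+1) ∧ ε/2 ≤ dist (x (f k)) (x (f (k+1))) := by
    intro k
    exact Classical.choose_spec (key (f k))
  have hmono : ∀ i, i + 1 < N → f i < f (i+1) := by
    intro i _
    exact lt_of_lt_of_le (hβ (f i)) (hf i).1
  have := hN N f hmono (fun i _ => (hf i).1) (fun i _ => (hf i).2)
  exact lt_irrefl N this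
end
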